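/- If ρ = ρ_c := 4/(λmax(λmax − 2)) with λmax > 2, then the pair (x(t), λ(t)) with x(t) = −1 + (2/λmax − 1)λ(t) solves the system x' = (x + λ)² − 1, λ' = ρ λ(λmax − λ), for every solution λ of the second equation with values in (0, λmax). -/

import Mathlib

/-! Along the line `x = -1 + (2/λmax - 1) λ` one has `x + λ = 2λ/λmax - 1`, so the first vector
field component `(x + λ)² - 1` equals `-(4/λmax²) λ (λmax - λ)`; at the critical rate this is exactly
the slope `2/λmax - 1` times the logistic field `ρ λ (λmax - λ)`, i.e. the field is tangent to the line. -/

theorem slope_mul_logistic_eq_of_critical_rate {lmax : ℝ} (h0 : lmax ≠ 0) (h2 : lmax - 2 ≠ 0)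
    (l : ℝ) :
    (2 / lmax - 1) * (4 / (lmax * (lmax - 2)) * l * (lmax - l)) =
      ((-1 + (2 / lmax - 1) * l) + l) ^ 2 - 1 := by
  field_simp
  ring

theorem stmt3_general (lmax ρ : ℝ) (hl : 2 < lmax) (hρ : ρ = 4 / (lmax * (lmax - 2)))
    (lam : ℝ → ℝ)
    (hlam : ∀ t, HasDerivAt lam (ρ * lam t * (lmax - lam t)) t) :
    ∀ t, HasDerivAt (fun t => -1 + (2 / lmax - 1) * lam t)
      (((-1 + (2 / lmax - 1) * lam t) + lam t) ^ 2 - 1) t := by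
  intro t
  subst hρ
  rw [← slope_mul_logistic_eq_of_critical_rate (by linarith) (by linarith)]
  exact ((hlam t).const_mul _).const_add _

theorem stmt3 (lmax ρ : ℝ) (hl : 2 < lmax) (hρ : ρ = 4 / (lmax * (lmax - 2)))
    (lam : ℝ → ℝ)
    (hlam : ∀ t, HasDerivAt lam (ρ * lam t * (lmax - lam t)) t)
    (hrange : ∀ t, lam t ∈ Set.Ioo 0 lmax) :
    ∀ t, HasDerivAt (fun t => -1 + (2 / lmax - 1) * lam t)
      (((-1 + (2 / lmax - 1) * lam t) + lam t) ^ 2 - 1) t :=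
  stmt3_general lmax ρ hl hρ lam hlam
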